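/- arXiv:2303.16768 — 2 statements merged into one kernel-verified Lean document; each statement's English description precedes it below -/
import Mathlib

section
/- Let K be a field of characteristic zero, R = K[x,y,z,u,v] acting on S = K[X,Y,Z,U,V] by differentiation, and F = X·U^{d-1} + Y·U^{d-2}·V + Z·V^{d-1} with d ≥ 5. Then for any a_0, a_2 ∈ K, the linear form ℓ = a_0·x + a_2·z satisfies ℓ^2 ∘ (G·F) = 0 for every G ∈ R, i.e., ℓ^2 = 0 in A_F = R/Ann(F). -/
/-!
Since the apolarity action is multiplicative, `ℓ²G ∘ F = G ∘ (ℓ ∘ (ℓ ∘ F))`. The form `F` is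
linear in `X` and `Z`, and `ℓ` differentiates only in those two directions: `ℓ ∘ F` is
`a₀ U^{d-1} + a₂ V^{d-1}`, which no longer involves `X` or `Z`, so `ℓ ∘ (ℓ ∘ F) = 0`.
-/

open MvPolynomial

/-- The apolarity action `p ∘ F` of a polynomial `p` (in the "differential
operator" variables) on a polynomial `F`: each variable of `p` acts as the
partial derivative with respect to the corresponding variable of `F`. -/
noncomputable def act {K : Type*} [CommSemiring K] {n : ℕ}
    (p F : MvPolynomial (Fin n) K) : MvPolynomial (Fin n) K :=
  (AddMonoidAlgebra.coeff p).sum fun m c =>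
    c • ((((List.finRange n).map fun i =>
      (((pderiv i).toLinearMap : Module.End K (MvPolynomial (Fin n) K)) ^ m i)).prod) F)

/-- `Ann F`: the set of differential operators annihilating `F`. -/
def annSet {K : Type*} [CommSemiring K] {n : ℕ} (F : MvPolynomial (Fin n) K) :
    Set (MvPolynomial (Fin n) K) := {p | act p F = 0}

theorem List.prod_map_mul_of_commute {ι M : Type*} [Monoid M] (l : List ι) (f g : ι → M)
    (hcomm : ∀ i j, Commute (g i) (f j)) :
    (l.map fun i => f i * g i).prod = (l.map f).prod * (l.map g).prod := by
  induction l with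
  | nil => simp
  | cons a l ih =>
    have hga : Commute (g a) (l.map f).prod :=
      Commute.list_prod_right _ _ fun x hx => by
        obtain ⟨j, -, rfl⟩ := List.mem_map.mp hx
        exact hcomm a j
    simp only [List.map_cons, List.prod_cons, ih, mul_assoc, hga.left_comm]

section Apolarity

variable {K : Type*} [CommSemiring K] {n : ℕ}

theorem MvPolynomial.pderiv_pderiv_comm {σ : Type*} (i j : σ) (f : MvPolynomial σ K) :
    pderiv i (pderiv j f) = pderiv j (pderiv i f) := by
  classical
  induction f using MvPolynomial.induction_on with
  | C a => simp
  | add p q hp hq => simp [hp, hq]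
  | mul_X p s hp =>
    simp [hp, Pi.single_apply, apply_ite (pderiv i), apply_ite (pderiv j)]
    ring

noncomputable def diffOp (m : Fin n →₀ ℕ) : Module.End K (MvPolynomial (Fin n) K) :=
  ((List.finRange n).map fun i =>
    ((pderiv i).toLinearMap : Module.End K (MvPolynomial (Fin n) K)) ^ m i).prod

theorem diffOp_add (m m' : Fin n →₀ ℕ) : diffOp (K := K) (m + m') = diffOp m * diffOp m' := by
  simp only [diffOp, Finsupp.add_apply, pow_add]
  refine List.prod_map_mul_of_commute _ _ _ fun i j => Commute.pow_pow ?_ _ _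
  exact LinearMap.ext fun f => pderiv_pderiv_comm i j f

theorem diffOp_single_one (i : Fin n) :
    diffOp (K := K) (Finsupp.single i 1) = (pderiv i).toLinearMap := by
  classical
  rw [diffOp, List.prod_map_eq_pow_single i _ fun j hji _ => by simp [hji.symm],
    List.count_finRange, Finsupp.single_eq_same, pow_one, pow_one]

theorem act_monomial (m : Fin n →₀ ℕ) (c : K) (F : MvPolynomial (Fin n) K) :
    act (monomial m c) F = c • diffOp m F :=
  Finsupp.sum_single_index (by simp)

theorem act_add (p q F : MvPolynomial (Fin n) K) : act (p + q) F = act p F + act q F :=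
  Finsupp.sum_add_index' (by simp) fun _ _ _ => add_smul _ _ _

theorem act_zero_right (p : MvPolynomial (Fin n) K) : act p 0 = 0 := by
  simp [act, Finsupp.sum]

theorem act_monomial_mul (m : Fin n →₀ ℕ) (c : K) (q F : MvPolynomial (Fin n) K) :
    act (monomial m c * q) F = c • diffOp m (act q F) := by
  induction q using MvPolynomial.induction_on' with
  | monomial m' c' =>
    rw [monomial_mul, act_monomial, act_monomial, diffOp_add, map_smul, smul_smul]
    rfl
  | add q₁ q₂ h₁ h₂ => rw [mul_add, act_add, act_add, h₁, h₂, map_add, smul_add]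

theorem act_mul (p q F : MvPolynomial (Fin n) K) : act (p * q) F = act p (act q F) := by
  induction p using MvPolynomial.induction_on' with
  | monomial m c => rw [act_monomial_mul, act_monomial]
  | add p₁ p₂ h₁ h₂ => rw [add_mul, act_add, act_add, h₁, h₂]

theorem act_C_mul_X (a : K) (i : Fin n) (F : MvPolynomial (Fin n) K) :
    act (C a * X i) F = a • pderiv i F := by
  rw [C_mul_X_eq_monomial, act_monomial, diffOp_single_one]
  rfl

theorem act_linearForm (a b : K) (i j : Fin n) (F : MvPolynomial (Fin n) K) :
    act (C a * X i + C b * X j) F = a • pderiv i F + b • pderiv j F := by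
  rw [act_add, act_C_mul_X, act_C_mul_X]

end Apolarity

theorem stmt7_general {K : Type*} [Field K] (d : ℕ)
    (F : MvPolynomial (Fin 5) K)
    (hF : F = X 0 * X 3 ^ (d - 1) + X 1 * X 3 ^ (d - 2) * X 4
      + X 2 * X 4 ^ (d - 1))
    (a₀ a₂ : K) (ℓ : MvPolynomial (Fin 5) K)
    (hℓ : ℓ = C a₀ * X 0 + C a₂ * X 2) :
    ∀ G : MvPolynomial (Fin 5) K, act (ℓ ^ 2 * G) F = 0 := by
  intro G
  have hℓF : act ℓ F = a₀ • X 3 ^ (d - 1) + a₂ • X 4 ^ (d - 1) := by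
    rw [hℓ, act_linearForm, hF]
    simp [pderiv_X]
  have hℓℓF : act ℓ (act ℓ F) = 0 := by
    rw [hℓF, hℓ, act_linearForm]
    simp [pderiv_X]
  rw [show ℓ ^ 2 * G = G * ℓ * ℓ by ring, act_mul, act_mul, hℓℓF, act_zero_right]

/-- With `R = K[x,y,z,u,v]` acting on `S = K[X,Y,Z,U,V]` by
differentiation (variables indexed `0,...,4`), `K` of characteristic zero, and
`F = X·U^{d-1} + Y·U^{d-2}·V + Z·V^{d-1}` with `d ≥ 5`, for any `a₀, a₂ ∈ K`
the linear form `ℓ = a₀x + a₂z` satisfies `ℓ²·G ∘ F = 0` for every `G ∈ R`,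
i.e. `ℓ² = 0` in `A_F = R/Ann F`. -/
theorem stmt7 {K : Type*} [Field K] [CharZero K] (d : ℕ) (hd : 5 ≤ d)
    (F : MvPolynomial (Fin 5) K)
    (hF : F = X 0 * X 3 ^ (d - 1) + X 1 * X 3 ^ (d - 2) * X 4
      + X 2 * X 4 ^ (d - 1))
    (a₀ a₂ : K) (ℓ : MvPolynomial (Fin 5) K)
    (hℓ : ℓ = C a₀ * X 0 + C a₂ * X 2) :
    ∀ G : MvPolynomial (Fin 5) K, act (ℓ ^ 2 * G) F = 0 :=
  stmt7_general d F hF a₀ a₂ ℓ hℓ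
end

section
/- Let d ≥ 11. If a Perazzo form F = X·p_0(U,V) + Y·p_1(U,V) + Z·p_2(U,V) + G(U,V) of degree d has associated algebra A_F whose Hilbert function h satisfies h_3 = 12, then h_2 = 9; in particular the Hilbert function of A_F cannot satisfy h_2 = 8 and h_3 = 12 simultaneously. -/
open MvPolynomial

/-- The span of the `i`-th order derivatives of `F`; its dimension is the value
`h_i` of the Hilbert function of the Artinian Gorenstein algebra `A_F`. -/
noncomputable def derivSpan {K : Type*} [Field K] {n : ℕ}
    (F : MvPolynomial (Fin n) K) (i : ℕ) : Submodule K (MvPolynomial (Fin n) K) :=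
  Submodule.span K ((fun p => act p F) '' (homogeneousSubmodule (Fin n) K i : Set _))

namespace S19

/-! ### Generic lemmas on `act` and `derivSpan` -/

section Generic

variable {K : Type*} [CommSemiring K] {n : ℕ}

/-- The differential operator associated to a monomial exponent `m`. -/
noncomputable def Phi (m : Fin n →₀ ℕ) : Module.End K (MvPolynomial (Fin n) K) :=
  ((List.finRange n).map fun i =>
      (((pderiv i).toLinearMap : Module.End K (MvPolynomial (Fin n) K)) ^ m i)).prod

lemma act_def (p F : MvPolynomial (Fin n) K) :
    act p F = (AddMonoidAlgebra.coeff p).sum fun m c => c • Phi m F := rfl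

lemma pderiv_pderiv_comm (i j : Fin n) (f : MvPolynomial (Fin n) K) :
    pderiv i (pderiv j f) = pderiv j (pderiv i f) := by
  induction f using MvPolynomial.induction_on' with
  | monomial m a =>
    rcases eq_or_ne i j with rfl | hij
    · rfl
    · have h1 : ((m - Finsupp.single j 1 : Fin n →₀ ℕ)) i = m i := by
        rw [Finsupp.tsub_apply, Finsupp.single_eq_of_ne' (Ne.symm hij), Nat.sub_zero]
      have h2 : ((m - Finsupp.single i 1 : Fin n →₀ ℕ)) j = m j := by
        rw [Finsupp.tsub_apply, Finsupp.single_eq_of_ne' hij, Nat.sub_zero]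
      have he : (m - Finsupp.single j 1) - Finsupp.single i 1
          = (m - Finsupp.single i 1) - Finsupp.single j 1 := by
        ext k
        simp only [Finsupp.tsub_apply]
        omega
      simp only [pderiv_monomial, h1, h2, he]
      rw [mul_right_comm]
  | add p q hp hq => simp [hp, hq]

lemma commute_pderiv (i j : Fin n) :
    Commute ((pderiv i).toLinearMap : Module.End K (MvPolynomial (Fin n) K))
      ((pderiv j).toLinearMap) := by
  apply LinearMap.ext
  intro f
  exact pderiv_pderiv_comm i j f

lemma list_prod_map_mul {M α : Type*} [Monoid M] (f g : α → M) :
    ∀ (l : List α), (∀ a b, Commute (f a) (g b)) →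
      (l.map fun a => f a * g a).prod = (l.map f).prod * (l.map g).prod := by
  intro l
  induction l with
  | nil => simp
  | cons a t ih =>
    intro h
    have hc : Commute (g a) ((t.map f).prod) := by
      apply Commute.list_prod_right
      intro y hy
      obtain ⟨b, hb, rfl⟩ := List.mem_map.mp hy
      exact (h b a).symm
    simp only [List.map_cons, List.prod_cons, ih h]
    rw [mul_assoc, ← mul_assoc (g a), hc.eq]
    noncomm_ring

lemma list_prod_map_eq_single {M α : Type*} [Monoid M] (f : α → M) :
    ∀ (l : List α) (i : α), i ∈ l → l.Nodup → (∀ j ∈ l, j ≠ i → f j = 1) →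
      (l.map f).prod = f i := by
  intro l
  induction l with
  | nil => intro i hi; simp at hi
  | cons a t ih =>
    intro i hi hnd h1
    rcases List.mem_cons.mp hi with rfl | hit
    · simp only [List.map_cons, List.prod_cons]
      have : (t.map f).prod = 1 := by
        apply List.prod_eq_one
        intro x hx
        obtain ⟨b, hb, rfl⟩ := List.mem_map.mp hx
        exact h1 b (List.mem_cons_of_mem _ hb) (fun h => ((List.nodup_cons.mp hnd).1 (h ▸ hb)))
      rw [this, mul_one]
    · have ha : f a = 1 := by
        apply h1 a List.mem_cons_self
        rintro rfl
        exact (List.nodup_cons.mp hnd).1 hit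
      simp only [List.map_cons, List.prod_cons, ha, one_mul]
      exact ih i hit (List.nodup_cons.mp hnd).2
        (fun j hj => h1 j (List.mem_cons_of_mem _ hj))

lemma Phi_add (m₁ m₂ : Fin n →₀ ℕ) :
    (Phi (m₁ + m₂) : Module.End K (MvPolynomial (Fin n) K)) = Phi m₁ * Phi m₂ := by
  unfold Phi
  have : ((List.finRange n).map fun i =>
      (((pderiv i).toLinearMap : Module.End K (MvPolynomial (Fin n) K)) ^ (m₁ + m₂) i)) =
      ((List.finRange n).map fun i =>
      ((((pderiv i).toLinearMap : Module.End K (MvPolynomial (Fin n) K)) ^ m₁ i) *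
       (((pderiv i).toLinearMap) ^ m₂ i))) := by
    apply List.map_congr_left
    intro i _
    rw [Finsupp.add_apply, pow_add]
  rw [this]
  exact list_prod_map_mul _ _ _ (fun a b => (commute_pderiv a b).pow_pow _ _)

lemma Phi_single (i : Fin n) :
    (Phi (Finsupp.single i 1) : Module.End K (MvPolynomial (Fin n) K)) =
      (pderiv i).toLinearMap := by
  unfold Phi
  have := list_prod_map_eq_single
    (fun j => (((pderiv j).toLinearMap : Module.End K (MvPolynomial (Fin n) K)) ^
      (Finsupp.single i 1) j))
    (List.finRange n) i (List.mem_finRange i) (List.nodup_finRange n) ?_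
  · rw [this]
    simp
  · intro j _ hj
    simp [Finsupp.single_eq_of_ne' (Ne.symm hj)]

lemma act_monomial (m : Fin n →₀ ℕ) (c : K) (F : MvPolynomial (Fin n) K) :
    act (monomial m c) F = c • Phi m F := by
  rw [act_def]
  exact sum_monomial_eq (by simp)

lemma fdeg_add (a b : Fin n →₀ ℕ) : (a + b).degree = a.degree + b.degree := by
  simp [Finsupp.degree_eq_weight_one, map_add]

lemma fdeg_single (i : Fin n) (k : ℕ) : (Finsupp.single i k).degree = k := by
  rcases eq_or_ne k 0 with rfl | h
  · simp [Finsupp.degree]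
  · exact Finsupp.degree_single i k

/-- Decomposition of a multi-index of positive degree. -/
lemma exists_degree_succ {m : Fin n →₀ ℕ} {k : ℕ} (h : m.degree = k + 1) :
    ∃ (i : Fin n) (m' : Fin n →₀ ℕ), m = Finsupp.single i 1 + m' ∧ m'.degree = k := by
  have hm : m ≠ 0 := by
    intro h0
    rw [h0, map_zero] at h
    omega
  obtain ⟨i, hi⟩ : ∃ i, m i ≠ 0 := by
    by_contra hc
    push_neg at hc
    exact hm (Finsupp.ext fun j => hc j)
  have hdec : m = Finsupp.single i 1 + (m - Finsupp.single i 1) := by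
    ext j
    rcases eq_or_ne i j with rfl | hij
    · simp only [Finsupp.add_apply, Finsupp.tsub_apply, Finsupp.single_eq_same]
      omega
    · simp only [Finsupp.add_apply, Finsupp.tsub_apply, Finsupp.single_eq_of_ne' hij]
      omega
  refine ⟨i, m - Finsupp.single i 1, hdec, ?_⟩
  have hsum : (Finsupp.single i 1 + (m - Finsupp.single i 1)).degree = k + 1 := by
    rw [← hdec]; exact h
  rw [fdeg_add, fdeg_single] at hsum
  omega

lemma degree_two_decomp {m : Fin n →₀ ℕ} (h : m.degree = 2) :
    ∃ i j, m = Finsupp.single i 1 + Finsupp.single j 1 := by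
  obtain ⟨i, m', rfl, h'⟩ := exists_degree_succ h
  obtain ⟨j, m'', rfl, h''⟩ := exists_degree_succ h'
  rw [Finsupp.degree_eq_zero_iff] at h''
  exact ⟨i, j, by rw [h'', add_zero]⟩

lemma degree_three_decomp {m : Fin n →₀ ℕ} (h : m.degree = 3) :
    ∃ i j k, m = Finsupp.single i 1 + (Finsupp.single j 1 + Finsupp.single k 1) := by
  obtain ⟨i, m', rfl, h'⟩ := exists_degree_succ h
  obtain ⟨j, k, hm⟩ := degree_two_decomp h'
  exact ⟨i, j, k, by rw [hm]⟩

end Generic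

section GenericField

variable {K : Type*} [Field K] [CharZero K] {n : ℕ}

lemma derivSpan_two (F : MvPolynomial (Fin n) K) :
    derivSpan F 2 = Submodule.span K
      (Set.range fun ij : Fin n × Fin n => pderiv ij.1 (pderiv ij.2 F)) := by
  apply le_antisymm
  · rw [derivSpan]
    rw [Submodule.span_le]
    rintro x ⟨q, hq, rfl⟩
    have hq2 : q.IsHomogeneous 2 := (mem_homogeneousSubmodule 2 q).mp hq
    show act q F ∈ (Submodule.span K _ : Submodule K _)
    rw [act_def]
    apply Submodule.sum_mem
    intro m hm
    have hdeg : m.degree = 2 := by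
      by_contra hne
      exact (Finsupp.mem_support_iff.mp hm) (hq2.coeff_eq_zero hne)
    obtain ⟨i, j, rfl⟩ := degree_two_decomp hdeg
    apply Submodule.smul_mem
    have : (Phi (Finsupp.single i 1 + Finsupp.single j 1) :
        Module.End K (MvPolynomial (Fin n) K)) F = pderiv i (pderiv j F) := by
      rw [Phi_add, Phi_single, Phi_single]
      rfl
    rw [this]
    exact Submodule.subset_span ⟨(i, j), rfl⟩
  · rw [Submodule.span_le]
    rintro x ⟨⟨i, j⟩, rfl⟩
    have : pderiv i (pderiv j F) =
        act (monomial (Finsupp.single i 1 + Finsupp.single j 1) (1 : K)) F := by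
      rw [act_monomial, Phi_add, Phi_single, Phi_single, one_smul]
      rfl
    rw [derivSpan]
    apply Submodule.subset_span
    refine ⟨monomial (Finsupp.single i 1 + Finsupp.single j 1) (1 : K), ?_, this.symm⟩
    simp only [SetLike.mem_coe, mem_homogeneousSubmodule]
    apply isHomogeneous_monomial
    rw [fdeg_add, fdeg_single, fdeg_single]

lemma derivSpan_three (F : MvPolynomial (Fin n) K) :
    derivSpan F 3 = Submodule.span K
      (Set.range fun ijk : Fin n × Fin n × Fin n =>
        pderiv ijk.1 (pderiv ijk.2.1 (pderiv ijk.2.2 F))) := by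
  apply le_antisymm
  · rw [derivSpan]
    rw [Submodule.span_le]
    rintro x ⟨q, hq, rfl⟩
    have hq3 : q.IsHomogeneous 3 := (mem_homogeneousSubmodule 3 q).mp hq
    show act q F ∈ (Submodule.span K _ : Submodule K _)
    rw [act_def]
    apply Submodule.sum_mem
    intro m hm
    have hdeg : m.degree = 3 := by
      by_contra hne
      exact (Finsupp.mem_support_iff.mp hm) (hq3.coeff_eq_zero hne)
    obtain ⟨i, j, k, rfl⟩ := degree_three_decomp hdeg
    apply Submodule.smul_mem
    have : (Phi (Finsupp.single i 1 + (Finsupp.single j 1 + Finsupp.single k 1)) :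
        Module.End K (MvPolynomial (Fin n) K)) F =
        pderiv i (pderiv j (pderiv k F)) := by
      rw [Phi_add, Phi_add, Phi_single, Phi_single, Phi_single]
      rfl
    rw [this]
    exact Submodule.subset_span ⟨(i, j, k), rfl⟩
  · rw [Submodule.span_le]
    rintro x ⟨⟨i, j, k⟩, rfl⟩
    have : pderiv i (pderiv j (pderiv k F)) =
        act (monomial (Finsupp.single i 1 + (Finsupp.single j 1 + Finsupp.single k 1))
          (1 : K)) F := by
      rw [act_monomial, Phi_add, Phi_add, Phi_single, Phi_single, Phi_single, one_smul]
      rfl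
    rw [derivSpan]
    apply Submodule.subset_span
    refine ⟨monomial (Finsupp.single i 1 + (Finsupp.single j 1 + Finsupp.single k 1))
      (1 : K), ?_, this.symm⟩
    simp only [SetLike.mem_coe, mem_homogeneousSubmodule]
    apply isHomogeneous_monomial
    rw [fdeg_add, fdeg_add, fdeg_single, fdeg_single, fdeg_single]

/-- Rank bound: if a finite family admits `r` independent linear relations then the
dimension of its span is at most `card ι - r`. -/
lemma rank_bound {V : Type*} [AddCommGroup V] [Module K V]
    {ι : Type*} [Fintype ι] (f : ι → V) {r : ℕ} (vs : Fin r → (ι → K))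
    (hvs : LinearIndependent K vs) (hker : ∀ j, ∑ x, vs j x • f x = 0) :
    Module.finrank K (Submodule.span K (Set.range f)) + r ≤ Fintype.card ι := by
  classical
  set L : (ι → K) →ₗ[K] V := Fintype.linearCombination K f with hL
  have hrange : LinearMap.range L = Submodule.span K (Set.range f) := by
    rw [hL, ← Finsupp.linearCombination_eq_fintype_linearCombination K f,
      LinearMap.range_comp, LinearEquiv.range, Submodule.map_top,
      Finsupp.range_linearCombination]
  have hkerc : Submodule.span K (Set.range vs) ≤ LinearMap.ker L := by
    rw [Submodule.span_le]
    rintro x ⟨j, rfl⟩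
    simp only [SetLike.mem_coe, LinearMap.mem_ker, hL,
      Fintype.linearCombination_apply]
    exact hker j
  have h1 : r ≤ Module.finrank K (LinearMap.ker L) := by
    have := finrank_span_eq_card hvs
    calc r = Fintype.card (Fin r) := by simp
    _ = Module.finrank K (Submodule.span K (Set.range vs)) := (finrank_span_eq_card hvs).symm
    _ ≤ Module.finrank K (LinearMap.ker L) := Submodule.finrank_mono hkerc
  have h2 := LinearMap.finrank_range_add_finrank_ker L
  rw [hrange] at h2
  rw [Module.finrank_fintype_fun_eq_card] at h2
  omega

end GenericField

/-! ### The Perazzo setup -/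

section Perazzo

variable {K : Type*} [CommSemiring K]

/-- The embedding of the `U,V` variables. -/
def emb : Fin 2 → Fin 5 := ![3, 4]

/-- The embedding of the `X,Y,Z` variables. -/
def embX : Fin 3 → Fin 5 := ![0, 1, 2]

lemma emb_inj : Function.Injective (emb) := by decide

lemma fin5_cases (j : Fin 5) : (∃ i : Fin 3, j = embX i) ∨ (∃ a : Fin 2, j = emb a) := by
  fin_cases j
  · exact Or.inl ⟨0, rfl⟩
  · exact Or.inl ⟨1, rfl⟩
  · exact Or.inl ⟨2, rfl⟩
  · exact Or.inr ⟨0, rfl⟩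
  · exact Or.inr ⟨1, rfl⟩

/-- The Perazzo polynomial shape. -/
noncomputable def PZ (p : Fin 3 → MvPolynomial (Fin 2) K) (G : MvPolynomial (Fin 2) K) :
    MvPolynomial (Fin 5) K :=
  X 0 * rename emb (p 0) + X 1 * rename emb (p 1) + X 2 * rename emb (p 2) + rename emb G

lemma pderiv_rename_emb_zero {j : Fin 5} (hj : ∀ a, emb a ≠ j) (q : MvPolynomial (Fin 2) K) :
    pderiv j (rename emb q) = 0 := by
  induction q using MvPolynomial.induction_on with
  | C a => simp
  | add p q hp hq => simp [hp, hq]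
  | mul_X q s ih =>
    rw [map_mul, rename_X, pderiv_mul, ih, pderiv_X_of_ne (hj s), mul_zero, zero_mul,
      add_zero]

lemma pderiv_embX_rename (i : Fin 3) (q : MvPolynomial (Fin 2) K) :
    pderiv (embX i) (rename emb q) = 0 := by
  apply pderiv_rename_emb_zero
  intro a
  fin_cases i <;> fin_cases a <;> decide

lemma pderiv_emb_rename (a : Fin 2) (q : MvPolynomial (Fin 2) K) :
    pderiv (emb a) (rename emb q) = rename emb (pderiv a q) :=
  pderiv_rename emb_inj a q

lemma pderiv_embX_PZ (i : Fin 3) (p : Fin 3 → MvPolynomial (Fin 2) K)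
    (G : MvPolynomial (Fin 2) K) :
    pderiv (embX i) (PZ p G) = rename emb (p i) := by
  fin_cases i
  · simp [PZ, embX, pderiv_mul,
      pderiv_rename_emb_zero (show ∀ a, emb a ≠ (0 : Fin 5) by decide)]
  · simp [PZ, embX, pderiv_mul,
      pderiv_rename_emb_zero (show ∀ a, emb a ≠ (1 : Fin 5) by decide)]
  · simp [PZ, embX, pderiv_mul,
      pderiv_rename_emb_zero (show ∀ a, emb a ≠ (2 : Fin 5) by decide)]

lemma pderiv_emb_PZ (a : Fin 2) (p : Fin 3 → MvPolynomial (Fin 2) K)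
    (G : MvPolynomial (Fin 2) K) :
    pderiv (emb a) (PZ p G) = PZ (fun i => pderiv a (p i)) (pderiv a G) := by
  have hx : ∀ k : Fin 5, (∃ i : Fin 3, k = embX i) → pderiv (emb a) (X k : MvPolynomial (Fin 5) K) = 0 := by
    rintro k ⟨i, rfl⟩
    apply pderiv_X_of_ne
    fin_cases i <;> fin_cases a <;> decide
  simp only [PZ, map_add, pderiv_mul, pderiv_emb_rename]
  rw [hx 0 ⟨0, rfl⟩, hx 1 ⟨1, rfl⟩, hx 2 ⟨2, rfl⟩]
  ring

end Perazzo

end S19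

namespace S19

section Main

variable {K : Type*} [Field K] [CharZero K]

/-- First partials of the `pᵢ` (embedded in 5 variables). -/
noncomputable def s1 (p : Fin 3 → MvPolynomial (Fin 2) K) :
    Fin 3 × Fin 2 → MvPolynomial (Fin 5) K :=
  fun x => rename emb (pderiv x.2 (p x.1))

/-- Symmetric index patterns for second partials. -/
def pat2 : Fin 3 → Fin 2 × Fin 2 := ![(0, 0), (0, 1), (1, 1)]

/-- Second partials of the `pᵢ` (embedded in 5 variables). -/
noncomputable def s2 (p : Fin 3 → MvPolynomial (Fin 2) K) :
    Fin 3 × Fin 3 → MvPolynomial (Fin 5) K :=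
  fun x => rename emb (pderiv (pat2 x.2).1 (pderiv (pat2 x.2).2 (p x.1)))

/-- The "mixed" second derivatives of the Perazzo form. -/
noncomputable def t2 (p : Fin 3 → MvPolynomial (Fin 2) K) (G : MvPolynomial (Fin 2) K) :
    Fin 3 → MvPolynomial (Fin 5) K :=
  fun k => PZ (fun i => pderiv (pat2 k).1 (pderiv (pat2 k).2 (p i)))
    (pderiv (pat2 k).1 (pderiv (pat2 k).2 G))

/-- Symmetric index patterns for third partials. -/
def pat3 : Fin 4 → Fin 2 × Fin 2 × Fin 2 := ![(0, 0, 0), (0, 0, 1), (0, 1, 1), (1, 1, 1)]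

/-- The "mixed" third derivatives of the Perazzo form. -/
noncomputable def t3 (p : Fin 3 → MvPolynomial (Fin 2) K) (G : MvPolynomial (Fin 2) K) :
    Fin 4 → MvPolynomial (Fin 5) K :=
  fun k => PZ (fun i => pderiv (pat3 k).1 (pderiv (pat3 k).2.1 (pderiv (pat3 k).2.2 (p i))))
    (pderiv (pat3 k).1 (pderiv (pat3 k).2.1 (pderiv (pat3 k).2.2 G)))

lemma pat2_complete (a b : Fin 2) :
    ∃ k : Fin 3, ∀ q : MvPolynomial (Fin 2) K,
      pderiv a (pderiv b q) = pderiv (pat2 k).1 (pderiv (pat2 k).2 q) := by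
  fin_cases a <;> fin_cases b
  · exact ⟨0, fun q => rfl⟩
  · exact ⟨1, fun q => rfl⟩
  · exact ⟨1, fun q => pderiv_pderiv_comm 1 0 q⟩
  · exact ⟨2, fun q => rfl⟩

lemma pat3_complete (a b c : Fin 2) :
    ∃ k : Fin 4, ∀ q : MvPolynomial (Fin 2) K,
      pderiv a (pderiv b (pderiv c q)) =
        pderiv (pat3 k).1 (pderiv (pat3 k).2.1 (pderiv (pat3 k).2.2 q)) := by
  have h2 : ∀ x : Fin 2, x = 0 ∨ x = 1 := by decide
  rcases h2 a with rfl | rfl <;> rcases h2 b with rfl | rfl <;> rcases h2 c with rfl | rfl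
  · exact ⟨0, fun q => rfl⟩
  · exact ⟨1, fun q => rfl⟩
  · exact ⟨1, fun q => congrArg (pderiv 0) (pderiv_pderiv_comm 1 0 q)⟩
  · exact ⟨2, fun q => rfl⟩
  · exact ⟨1, fun q => (pderiv_pderiv_comm 1 0 (pderiv 0 q)).trans
      (congrArg (pderiv 0) (pderiv_pderiv_comm 1 0 q))⟩
  · exact ⟨2, fun q => pderiv_pderiv_comm 1 0 (pderiv 1 q)⟩
  · exact ⟨2, fun q => (congrArg (pderiv 1) (pderiv_pderiv_comm 1 0 q)).trans
      (pderiv_pderiv_comm 1 0 (pderiv 1 q))⟩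
  · exact ⟨3, fun q => rfl⟩

variable (p : Fin 3 → MvPolynomial (Fin 2) K) (G : MvPolynomial (Fin 2) K)

lemma spanA :
    derivSpan (PZ p G) 2 = Submodule.span K (Set.range (Sum.elim (s1 p) (t2 p G))) := by
  rw [derivSpan_two]
  apply le_antisymm
  · rw [Submodule.span_le]
    rintro x ⟨⟨i, j⟩, rfl⟩
    simp only [SetLike.mem_coe]
    rcases fin5_cases j with ⟨i', rfl⟩ | ⟨b, rfl⟩
    · rw [pderiv_embX_PZ]
      rcases fin5_cases i with ⟨i'', rfl⟩ | ⟨a, rfl⟩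
      · rw [pderiv_embX_rename]
        exact Submodule.zero_mem _
      · rw [pderiv_emb_rename]
        exact Submodule.subset_span ⟨Sum.inl (i', a), rfl⟩
    · rw [pderiv_emb_PZ]
      rcases fin5_cases i with ⟨i'', rfl⟩ | ⟨a, rfl⟩
      · rw [pderiv_embX_PZ]
        exact Submodule.subset_span ⟨Sum.inl (i'', b), rfl⟩
      · rw [pderiv_emb_PZ]
        obtain ⟨k, hk⟩ := pat2_complete (K := K) a b
        have h1 : (fun i => pderiv a (pderiv b (p i))) =
            fun i => pderiv (pat2 k).1 (pderiv (pat2 k).2 (p i)) :=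
          funext fun i => hk (p i)
        rw [h1, hk G]
        exact Submodule.subset_span ⟨Sum.inr k, rfl⟩
  · rw [Submodule.span_le]
    rintro x ⟨y, rfl⟩
    simp only [SetLike.mem_coe]
    rcases y with ⟨i, a⟩ | k
    · have : Sum.elim (s1 p) (t2 p G) (Sum.inl (i, a)) =
          pderiv (embX i) (pderiv (emb a) (PZ p G)) := by
        rw [pderiv_emb_PZ, pderiv_embX_PZ]
        rfl
      rw [this]
      exact Submodule.subset_span ⟨(embX i, emb a), rfl⟩
    · have : Sum.elim (s1 p) (t2 p G) (Sum.inr k) =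
          pderiv (emb (pat2 k).1) (pderiv (emb (pat2 k).2) (PZ p G)) := by
        rw [pderiv_emb_PZ, pderiv_emb_PZ]
        rfl
      rw [this]
      exact Submodule.subset_span ⟨(emb (pat2 k).1, emb (pat2 k).2), rfl⟩

lemma spanB :
    derivSpan (PZ p G) 3 ≤
      Submodule.span K (Set.range (s2 p)) ⊔ Submodule.span K (Set.range (t3 p G)) := by
  rw [derivSpan_three, Submodule.span_le]
  rintro x ⟨⟨i, j, k⟩, rfl⟩
  simp only [SetLike.mem_coe]
  rcases fin5_cases k with ⟨i0, rfl⟩ | ⟨c, rfl⟩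
  · rw [pderiv_embX_PZ]
    rcases fin5_cases j with ⟨i1, rfl⟩ | ⟨b, rfl⟩
    · rw [pderiv_embX_rename, map_zero]
      exact Submodule.zero_mem _
    · rw [pderiv_emb_rename]
      rcases fin5_cases i with ⟨i2, rfl⟩ | ⟨a, rfl⟩
      · rw [pderiv_embX_rename]
        exact Submodule.zero_mem _
      · rw [pderiv_emb_rename]
        obtain ⟨k', hk'⟩ := pat2_complete (K := K) a b
        rw [hk' (p i0)]
        exact Submodule.mem_sup_left (Submodule.subset_span ⟨(i0, k'), rfl⟩)
  · rw [pderiv_emb_PZ]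
    rcases fin5_cases j with ⟨i1, rfl⟩ | ⟨b, rfl⟩
    · rw [pderiv_embX_PZ]
      rcases fin5_cases i with ⟨i2, rfl⟩ | ⟨a, rfl⟩
      · rw [pderiv_embX_rename]
        exact Submodule.zero_mem _
      · rw [pderiv_emb_rename]
        obtain ⟨k', hk'⟩ := pat2_complete (K := K) a c
        rw [hk' (p i1)]
        exact Submodule.mem_sup_left (Submodule.subset_span ⟨(i1, k'), rfl⟩)
    · rw [pderiv_emb_PZ]
      rcases fin5_cases i with ⟨i2, rfl⟩ | ⟨a, rfl⟩
      · rw [pderiv_embX_PZ]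
        obtain ⟨k', hk'⟩ := pat2_complete (K := K) b c
        rw [hk' (p i2)]
        exact Submodule.mem_sup_left (Submodule.subset_span ⟨(i2, k'), rfl⟩)
      · rw [pderiv_emb_PZ]
        obtain ⟨k', hk'⟩ := pat3_complete (K := K) a b c
        have h1 : (fun i => pderiv a (pderiv b (pderiv c (p i)))) =
            fun i => pderiv (pat3 k').1 (pderiv (pat3 k').2.1 (pderiv (pat3 k').2.2 (p i))) :=
          funext fun i => hk' (p i)
        rw [h1, hk' G]
        exact Submodule.mem_sup_right (Submodule.subset_span ⟨k', rfl⟩)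

lemma rel_t2 (H8 : 8 ≤ Module.finrank K (Submodule.span K (Set.range (s2 p))))
    {μ : Fin 3 → K} (hrel : ∀ i : Fin 3, ∑ k, μ k • s2 p (i, k) = 0) :
    μ = 0 := by
  by_contra hμ
  obtain ⟨k0, hk0⟩ := Function.ne_iff.mp hμ
  set vs : Fin 3 → (Fin 3 × Fin 3 → K) :=
    fun i' x => if x.1 = i' then μ x.2 else 0 with hvsdef
  have hvs : LinearIndependent K vs := by
    rw [Fintype.linearIndependent_iff]
    intro g hg i'
    have h := congrFun hg (i', k0)
    simp only [Finset.sum_apply, Pi.smul_apply, smul_eq_mul, Pi.zero_apply, hvsdef,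
      mul_ite, mul_zero, Finset.sum_ite_eq, Finset.mem_univ, if_true] at h
    exact (mul_eq_zero.mp h).resolve_right hk0
  have hker : ∀ i', ∑ x : Fin 3 × Fin 3, vs i' x • s2 p x = 0 := by
    intro i'
    rw [Fintype.sum_prod_type]
    have step : ∀ i : Fin 3, (∑ k, vs i' (i, k) • s2 p (i, k)) = 0 := by
      intro i
      by_cases h : i = i'
      · subst h
        simp only [hvsdef, if_pos rfl]
        exact hrel i
      · simp [hvsdef, h]
    exact Finset.sum_eq_zero fun i _ => step i
  have := rank_bound (s2 p) vs hvs hker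
  simp only [Fintype.card_prod, Fintype.card_fin] at this
  omega

lemma rel_s1 (H8 : 8 ≤ Module.finrank K (Submodule.span K (Set.range (s2 p))))
    {c : Fin 3 × Fin 2 → K} (hrel : ∑ x, c x • s1 p x = 0) :
    c = 0 := by
  by_contra hc
  obtain ⟨⟨i0, a0⟩, hx0⟩ := Function.ne_iff.mp hc
  -- differentiate the relation
  have hd : ∀ b : Fin 2, ∑ x : Fin 3 × Fin 2,
      c x • rename emb (pderiv b (pderiv x.2 (p x.1))) = 0 := by
    intro b
    have h := congrArg (pderiv (emb b)) hrel
    rw [map_sum] at h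
    simp only [s1, Derivation.map_smul, pderiv_emb_rename, map_zero] at h
    exact h
  set vs : Fin 2 → (Fin 3 × Fin 3 → K) := fun b x =>
    if x.2 = Fin.castSucc b then c (x.1, 0)
    else if x.2 = b.succ then c (x.1, 1) else 0 with hvsdef
  have hvs : LinearIndependent K vs := by
    rw [Fintype.linearIndependent_iff]
    intro g hg
    have h0 : ∀ i : Fin 3, g 0 * c (i, 0) = 0 := by
      intro i
      have h := congrFun hg (i, 0)
      simpa [hvsdef, Fin.sum_univ_two] using h
    have h2 : ∀ i : Fin 3, g 1 * c (i, 1) = 0 := by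
      intro i
      have h := congrFun hg (i, 2)
      simpa [hvsdef, Fin.sum_univ_two] using h
    have h1 : ∀ i : Fin 3, g 0 * c (i, 1) + g 1 * c (i, 0) = 0 := by
      intro i
      have h := congrFun hg (i, 1)
      simpa [hvsdef, Fin.sum_univ_two] using h
    have hg01 : g 0 = 0 ∧ g 1 = 0 := by
      fin_cases a0
      · have hg0 : g 0 = 0 := (mul_eq_zero.mp (h0 i0)).resolve_right hx0
        have := h1 i0
        rw [hg0, zero_mul, zero_add] at this
        exact ⟨hg0, (mul_eq_zero.mp this).resolve_right hx0⟩
      · have hg1 : g 1 = 0 := (mul_eq_zero.mp (h2 i0)).resolve_right hx0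
        have := h1 i0
        rw [hg1, zero_mul, add_zero] at this
        exact ⟨(mul_eq_zero.mp this).resolve_right hx0, hg1⟩
    intro b
    fin_cases b
    · exact hg01.1
    · exact hg01.2
  have hker : ∀ b, ∑ x : Fin 3 × Fin 3, vs b x • s2 p x = 0 := by
    intro b
    fin_cases b
    · have h := hd 0
      rw [Fintype.sum_prod_type] at h ⊢
      simpa [hvsdef, s2, pat2, Fin.sum_univ_two, Fin.sum_univ_three] using h
    · have h := hd 1
      have hcomm : ∀ q : MvPolynomial (Fin 2) K,
          pderiv (1 : Fin 2) (pderiv (0 : Fin 2) q) = pderiv 0 (pderiv 1 q) :=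
        pderiv_pderiv_comm 1 0
      rw [Fintype.sum_prod_type] at h ⊢
      simpa [hvsdef, s2, pat2, Fin.sum_univ_two, Fin.sum_univ_three, hcomm] using h
  have := rank_bound (s2 p) vs hvs hker
  simp only [Fintype.card_prod, Fintype.card_fin] at this
  omega

lemma indep (H8 : 8 ≤ Module.finrank K (Submodule.span K (Set.range (s2 p)))) :
    LinearIndependent K (Sum.elim (s1 p) (t2 p G)) := by
  rw [Fintype.linearIndependent_iff]
  intro g hg
  rw [Fintype.sum_sum_type] at hg
  simp only [Sum.elim_inl, Sum.elim_inr] at hg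
  have hmu : ∀ i : Fin 3, ∑ k, g (Sum.inr k) • s2 p (i, k) = 0 := by
    intro i
    have h := congrArg (pderiv (embX i)) hg
    rw [map_add, map_sum, map_sum, map_zero] at h
    simp only [Derivation.map_smul] at h
    have e1 : ∀ x : Fin 3 × Fin 2, pderiv (embX i) (s1 p x) = 0 := by
      intro x
      exact pderiv_embX_rename i _
    have e2 : ∀ k : Fin 3, pderiv (embX i) (t2 p G k) = s2 p (i, k) := by
      intro k
      exact pderiv_embX_PZ i _ _
    simp only [e1, e2, smul_zero, Finset.sum_const_zero, zero_add] at h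
    exact h
  have hμ0 : (fun k => g (Sum.inr k)) = 0 := rel_t2 p H8 hmu
  have hμ0' : ∀ k, g (Sum.inr k) = 0 := fun k => congrFun hμ0 k
  rw [show (∑ k : Fin 3, g (Sum.inr k) • t2 p G k) = 0 from
    Finset.sum_eq_zero (fun k _ => by rw [hμ0' k, zero_smul]), add_zero] at hg
  have hc0 : (fun x => g (Sum.inl x)) = 0 := rel_s1 p H8 hg
  intro y
  rcases y with x | k
  · exact congrFun hc0 x
  · exact hμ0' k

end Main

end S19

/-- Let `d ≥ 11` and let
`F = X·p₀(U,V) + Y·p₁(U,V) + Z·p₂(U,V) + G(U,V)` be a Perazzo form of degree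
`d` in `K[X,Y,Z,U,V]` (variables indexed `0,...,4`; `p₀,p₁,p₂ ∈ K[U,V]`
homogeneous of degree `d−1`, linearly independent, `G ∈ K[U,V]` homogeneous of
degree `d`). If the Hilbert function `h` of the associated algebra `A_F`
satisfies `h₃ = 12`, then `h₂ = 9`; in particular `h` cannot satisfy `h₂ = 8`
and `h₃ = 12` simultaneously. (Here `h i` is the dimension of the span of the
`i`-th order partials of `F`, and polynomials in `U,V` are encoded via
`rename e` for `e =![3,4] : Fin 2 → Fin 5`.) -/
theorem stmt19 {K : Type*} [Field K] [CharZero K] (d : ℕ) (hd : 11 ≤ d)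
    (e : Fin 2 → Fin 5) (he : e = ![3, 4])
    (p : Fin 3 → MvPolynomial (Fin 2) K) (G : MvPolynomial (Fin 2) K)
    (hp : ∀ i, (p i).IsHomogeneous (d - 1)) (hG : G.IsHomogeneous d)
    (hli : LinearIndependent K p)
    (F : MvPolynomial (Fin 5) K)
    (hF : F = X 0 * rename e (p 0) + X 1 * rename e (p 1)
      + X 2 * rename e (p 2) + rename e G) :
    (Module.finrank K (derivSpan F 3) = 12 → Module.finrank K (derivSpan F 2) = 9) ∧
    ¬ (Module.finrank K (derivSpan F 2) = 8 ∧ Module.finrank K (derivSpan F 3) = 12) := by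
  subst he
  have hF' : F = S19.PZ p G := hF
  subst hF'
  have main : Module.finrank K (derivSpan (S19.PZ p G) 3) = 12 →
      Module.finrank K (derivSpan (S19.PZ p G) 2) = 9 := by
    intro h3
    -- derive the lower bound on the rank of the second partials
    haveI i1 : FiniteDimensional K (Submodule.span K (Set.range (S19.s2 p))) :=
      FiniteDimensional.span_of_finite K (Set.finite_range _)
    haveI i2 : FiniteDimensional K (Submodule.span K (Set.range (S19.t3 p G))) :=
      FiniteDimensional.span_of_finite K (Set.finite_range _)
    have hsup := Submodule.finrank_sup_add_finrank_inf_eq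
      (Submodule.span K (Set.range (S19.s2 p))) (Submodule.span K (Set.range (S19.t3 p G)))
    have ht3 : Module.finrank K (Submodule.span K (Set.range (S19.t3 p G))) ≤ 4 := by
      have := finrank_range_le_card (R := K) (S19.t3 p G)
      simpa [Set.finrank] using this
    have hmono : Module.finrank K (derivSpan (S19.PZ p G) 3) ≤
        Module.finrank K ↥((Submodule.span K (Set.range (S19.s2 p))) ⊔
          (Submodule.span K (Set.range (S19.t3 p G)))) :=
      Submodule.finrank_mono (S19.spanB p G)
    have H8 : 8 ≤ Module.finrank K (Submodule.span K (Set.range (S19.s2 p))) := by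
      omega
    have hind := S19.indep p G H8
    rw [S19.spanA p G, finrank_span_eq_card hind]
    simp
  refine ⟨main, ?_⟩
  rintro ⟨h2, h3⟩
  have h9 := main h3
  rw [h2] at h9
  exact absurd h9 (by norm_num)
end
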